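/- Let d ≥ 1, let E ⊆ ℝ^d be a finite set with at least two points, and let P_E be a 1-field on E. Then Γ̃(P_E) ≤ Γ(P_E) ≤ 2(1 + √2)·Γ̃(P_E). -/

import Mathlib

open scoped RealInnerProductSpace

/-- The affine polynomial (first order jet) `P_u(z) = f(u) + ⟪g(u), z - u⟫`. -/
noncomputable def jet {d : ℕ} (f : EuclideanSpace ℝ (Fin d) → ℝ)
    (g : EuclideanSpace ℝ (Fin d) → EuclideanSpace ℝ (Fin d))
    (u z : EuclideanSpace ℝ (Fin d)) : ℝ :=
  f u + ⟪g u, z - u⟫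

/-- `A(x,y) = |P_x(x) - P_y(x) + P_x(y) - P_y(y)| / |x - y|²`. -/
noncomputable def funA {d : ℕ} (f : EuclideanSpace ℝ (Fin d) → ℝ)
    (g : EuclideanSpace ℝ (Fin d) → EuclideanSpace ℝ (Fin d))
    (x y : EuclideanSpace ℝ (Fin d)) : ℝ :=
  |jet f g x x - jet f g y x + jet f g x y - jet f g y y| / ‖x - y‖ ^ 2

/-- `B(x,y) = ‖g(x) - g(y)‖ / |x - y|`. -/
noncomputable def funB {d : ℕ}
    (g : EuclideanSpace ℝ (Fin d) → EuclideanSpace ℝ (Fin d))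
    (x y : EuclideanSpace ℝ (Fin d)) : ℝ :=
  ‖g x - g y‖ / ‖x - y‖

/-- `Ã(x,y) = |P_x(x) - P_y(x)| / |x - y|²`. -/
noncomputable def funAtilde {d : ℕ} (f : EuclideanSpace ℝ (Fin d) → ℝ)
    (g : EuclideanSpace ℝ (Fin d) → EuclideanSpace ℝ (Fin d))
    (x y : EuclideanSpace ℝ (Fin d)) : ℝ :=
  |jet f g x x - jet f g y x| / ‖x - y‖ ^ 2

/-- `Γ(P_E)`: max over distinct pairs of `√(A² + B²) + A`. -/
noncomputable def Gamma {d : ℕ} (E : Set (EuclideanSpace ℝ (Fin d)))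
    (f : EuclideanSpace ℝ (Fin d) → ℝ)
    (g : EuclideanSpace ℝ (Fin d) → EuclideanSpace ℝ (Fin d)) : ℝ :=
  sSup {t : ℝ | ∃ x ∈ E, ∃ y ∈ E, x ≠ y ∧
    t = Real.sqrt (funA f g x y ^ 2 + funB g x y ^ 2) + funA f g x y}

/-- `Γ'(P_E)`: max over distinct pairs of `max {A, B}`. -/
noncomputable def GammaPrime {d : ℕ} (E : Set (EuclideanSpace ℝ (Fin d)))
    (f : EuclideanSpace ℝ (Fin d) → ℝ)
    (g : EuclideanSpace ℝ (Fin d) → EuclideanSpace ℝ (Fin d)) : ℝ :=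
  sSup {t : ℝ | ∃ x ∈ E, ∃ y ∈ E, x ≠ y ∧ t = max (funA f g x y) (funB g x y)}

/-- `Γ̃(P_E)`: max over distinct pairs of `max {Ã, B}`. -/
noncomputable def GammaTilde {d : ℕ} (E : Set (EuclideanSpace ℝ (Fin d)))
    (f : EuclideanSpace ℝ (Fin d) → ℝ)
    (g : EuclideanSpace ℝ (Fin d) → EuclideanSpace ℝ (Fin d)) : ℝ :=
  sSup {t : ℝ | ∃ x ∈ E, ∃ y ∈ E, x ≠ y ∧ t = max (funAtilde f g x y) (funB g x y)}

/-! Write `u = P_x(x) - P_y(x)` and `v = P_x(y) - P_y(y)`, so that `A = |u + v| / r²`,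
`Ã(x,y) = |u| / r²` and `Ã(y,x) = |v| / r²` with `r = |x - y|`. The antisymmetric part
`u - v = ⟪g x - g y, x - y⟫` is at most `B r²` in absolute value, whence `2 Ã ≤ A + B`; and
`A ≤ Ã(x,y) + Ã(y,x)`. Both inequalities then hold pair by pair: `max {Ã, B} ≤ √(A² + B²) + A`,
and with `m = Γ̃` we get `A ≤ 2m`, `B ≤ m`, so `√(A² + B²) + A ≤ 2√2 m + 2m`. -/

noncomputable def pairSup {α : Type*} (E : Set α) (φ : α → α → ℝ) : ℝ :=
  sSup {t : ℝ | ∃ x ∈ E, ∃ y ∈ E, x ≠ y ∧ t = φ x y}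

section pairSup

variable {α : Type*} {E : Set α} {φ : α → α → ℝ}

lemma le_pairSup (hE : E.Finite) {x y : α} (hx : x ∈ E) (hy : y ∈ E) (hxy : x ≠ y) :
    φ x y ≤ pairSup E φ := by
  refine le_csSup ?_ ⟨x, hx, y, hy, hxy, rfl⟩
  refine ((hE.prod hE).image fun p => φ p.1 p.2).bddAbove.mono ?_
  rintro t ⟨x, hx, y, hy, -, rfl⟩
  exact ⟨(x, y), ⟨hx, hy⟩, rfl⟩

lemma pairSup_nonneg (h : ∀ x y, 0 ≤ φ x y) : 0 ≤ pairSup E φ :=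
  Real.sSup_nonneg (by rintro t ⟨x, -, y, -, -, rfl⟩; exact h x y)

lemma pairSup_le_mul_pairSup (hE : E.Finite) {ψ : α → α → ℝ} {c : ℝ} (hc : 0 ≤ c)
    (hψ : ∀ x y, 0 ≤ ψ x y)
    (h : ∀ x ∈ E, ∀ y ∈ E, x ≠ y → φ x y ≤ c * max (ψ x y) (ψ y x)) :
    pairSup E φ ≤ c * pairSup E ψ := by
  refine Real.sSup_le ?_ (mul_nonneg hc (pairSup_nonneg hψ))
  rintro t ⟨x, hx, y, hy, hxy, rfl⟩
  refine (h x hx y hy hxy).trans (mul_le_mul_of_nonneg_left (max_le ?_ ?_) hc)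
  exacts [le_pairSup hE hx hy hxy, le_pairSup hE hy hx hxy.symm]

lemma pairSup_mono (hE : E.Finite) {ψ : α → α → ℝ} (hψ : ∀ x y, 0 ≤ ψ x y)
    (h : ∀ x ∈ E, ∀ y ∈ E, x ≠ y → φ x y ≤ ψ x y) : pairSup E φ ≤ pairSup E ψ := by
  simpa using pairSup_le_mul_pairSup hE zero_le_one hψ fun x hx y hy hxy =>
    (h x hx y hy hxy).trans (by simp)

end pairSup

lemma sqrt_sq_add_sq_add_le {a b m : ℝ} (ha : 0 ≤ a) (hb : 0 ≤ b) (ham : a ≤ 2 * m)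
    (hbm : b ≤ m) : Real.sqrt (a ^ 2 + b ^ 2) + a ≤ 2 * (1 + Real.sqrt 2) * m := by
  have hm : 0 ≤ m := hb.trans hbm
  have hsqrt : Real.sqrt (a ^ 2 + b ^ 2) ≤ 2 * Real.sqrt 2 * m := by
    rw [Real.sqrt_le_iff]
    refine ⟨by positivity, ?_⟩
    have h2 : Real.sqrt 2 ^ 2 = 2 := Real.sq_sqrt zero_le_two
    nlinarith [mul_le_mul ham ham ha (by linarith), mul_le_mul hbm hbm hb hm]
  linarith

section jet

variable {d : ℕ} {f : EuclideanSpace ℝ (Fin d) → ℝ}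
  {g : EuclideanSpace ℝ (Fin d) → EuclideanSpace ℝ (Fin d)}

lemma funA_nonneg (x y : EuclideanSpace ℝ (Fin d)) : 0 ≤ funA f g x y := by
  unfold funA; positivity

lemma funB_nonneg (x y : EuclideanSpace ℝ (Fin d)) : 0 ≤ funB g x y := by
  unfold funB; positivity

lemma jet_sub_jet_sub_eq_inner (x y : EuclideanSpace ℝ (Fin d)) :
    jet f g x x - jet f g y x - (jet f g x y - jet f g y y) = ⟪g x - g y, x - y⟫ := by
  simp only [jet, sub_self, inner_zero_right, inner_sub_left, inner_sub_right]
  ring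

lemma funA_le_funAtilde_add_funAtilde (x y : EuclideanSpace ℝ (Fin d)) :
    funA f g x y ≤ funAtilde f g x y + funAtilde f g y x := by
  rw [funA, funAtilde, funAtilde, norm_sub_rev y x, ← add_div, add_sub_assoc,
    abs_sub_comm (jet f g y y)]
  gcongr
  exact abs_add_le _ _

lemma two_mul_funAtilde_le (x y : EuclideanSpace ℝ (Fin d)) (hxy : x ≠ y) :
    2 * funAtilde f g x y ≤ funA f g x y + funB g x y := by
  set u := jet f g x x - jet f g y x
  set v := jet f g x y - jet f g y y
  have hr : 0 < ‖x - y‖ := norm_pos_iff.mpr (sub_ne_zero.mpr hxy)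
  have hanti : |u - v| ≤ ‖g x - g y‖ * ‖x - y‖ :=
    jet_sub_jet_sub_eq_inner (f := f) x y ▸ abs_real_inner_le_norm _ _
  have hB : funB g x y = ‖g x - g y‖ * ‖x - y‖ / ‖x - y‖ ^ 2 := by
    rw [funB]; field_simp
  have hA : funA f g x y = |u + v| / ‖x - y‖ ^ 2 := by
    rw [funA, add_sub_assoc]
  rw [funAtilde, hA, hB, ← add_div, ← mul_div_assoc]
  gcongr
  calc 2 * |u| = |(u + v) + (u - v)| := by rw [← abs_two, ← abs_mul]; ring_nf
    _ ≤ |u + v| + |u - v| := abs_add_le _ _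
    _ ≤ _ := by gcongr

lemma max_funAtilde_funB_le (x y : EuclideanSpace ℝ (Fin d)) (hxy : x ≠ y) :
    max (funAtilde f g x y) (funB g x y) ≤
      Real.sqrt (funA f g x y ^ 2 + funB g x y ^ 2) + funA f g x y := by
  have hB : funB g x y ≤ Real.sqrt (funA f g x y ^ 2 + funB g x y ^ 2) :=
    Real.le_sqrt_of_sq_le (le_add_of_nonneg_left (sq_nonneg _))
  have h2A := two_mul_funAtilde_le (f := f) (g := g) x y hxy
  have hA := funA_nonneg (f := f) (g := g) x y
  exact max_le (by linarith [(funB_nonneg (g := g) x y).trans hB]) (by linarith)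

lemma sqrt_funA_sq_add_funB_sq_add_funA_le (x y : EuclideanSpace ℝ (Fin d)) :
    Real.sqrt (funA f g x y ^ 2 + funB g x y ^ 2) + funA f g x y ≤
      2 * (1 + Real.sqrt 2) *
        max (max (funAtilde f g x y) (funB g x y)) (max (funAtilde f g y x) (funB g y x)) := by
  refine sqrt_sq_add_sq_add_le (funA_nonneg x y) (funB_nonneg x y) ?_ ?_
  · rw [two_mul]
    exact (funA_le_funAtilde_add_funAtilde x y).trans <| add_le_add
      ((le_max_left _ _).trans (le_max_left _ _)) ((le_max_left _ _).trans (le_max_right _ _))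
  · exact (le_max_right _ _).trans (le_max_left _ _)

end jet

theorem statement3_general {d : ℕ} (E : Set (EuclideanSpace ℝ (Fin d)))
    (hE : E.Finite)
    (f : EuclideanSpace ℝ (Fin d) → ℝ)
    (g : EuclideanSpace ℝ (Fin d) → EuclideanSpace ℝ (Fin d)) :
    GammaTilde E f g ≤ Gamma E f g ∧
      Gamma E f g ≤ 2 * (1 + Real.sqrt 2) * GammaTilde E f g := by
  have hA := funA_nonneg (f := f) (g := g)
  have hB := funB_nonneg (g := g)
  refine ⟨pairSup_mono hE (fun x y => ?_) fun x _ y _ hxy => max_funAtilde_funB_le x y hxy,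
    pairSup_le_mul_pairSup hE (by positivity) (fun x y => ?_)
      fun x _ y _ _ => sqrt_funA_sq_add_funB_sq_add_funA_le x y⟩
  · have := hA x y; positivity
  · exact (hB x y).trans (le_max_right _ _)

/-- `Γ̃(P_E) ≤ Γ(P_E) ≤ 2(1 + √2)·Γ̃(P_E)`. -/
theorem statement3 {d : ℕ} (hd : 1 ≤ d) (E : Set (EuclideanSpace ℝ (Fin d)))
    (hE : E.Finite) (h2 : ∃ x ∈ E, ∃ y ∈ E, x ≠ y)
    (f : EuclideanSpace ℝ (Fin d) → ℝ)
    (g : EuclideanSpace ℝ (Fin d) → EuclideanSpace ℝ (Fin d)) :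
    GammaTilde E f g ≤ Gamma E f g ∧
      Gamma E f g ≤ 2 * (1 + Real.sqrt 2) * GammaTilde E f g :=
  statement3_general E hE f g
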